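/- arXiv:1511.01153 — 3 statements merged into one kernel-verified Lean document; each statement's English description precedes it below -/
import Mathlib

section
/- Let (E, ‖·‖) be an L^∞-normed module with metric d(x,y) = E[1 ∧ ‖x−y‖]. If {x_n} is a d-Cauchy sequence in E and {ξ_n} is a sequence in L^∞ converging in probability to some ξ ∈ L^0, then {ξ_n x_n} is a d-Cauchy sequence in E. Moreover, if {η_n} is another sequence in L^∞ converging in probability to ξ and {y_n} is a d-Cauchy sequence with d(x_n, y_n) → 0, then d(ξ_n x_n, η_n y_n) → 0. -/
open MeasureTheory Filter
noncomputable section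

variable {Ω : Type} [MeasurableSpace Ω] {μ : Measure Ω}

/-- `L⁰(𝓕)`: equivalence classes of random variables, as a commutative ring. -/
instance : NatCast (Ω →ₘ[μ] ℝ) := ⟨fun n => AEEqFun.const Ω (n : ℝ)⟩
instance : IntCast (Ω →ₘ[μ] ℝ) := ⟨fun n => AEEqFun.const Ω (n : ℝ)⟩
instance : CommRing (Ω →ₘ[μ] ℝ) :=
  AEEqFun.toGerm_injective.commRing AEEqFun.toGerm AEEqFun.zero_toGerm AEEqFun.one_toGerm
    AEEqFun.add_toGerm AEEqFun.mul_toGerm AEEqFun.neg_toGerm AEEqFun.sub_toGerm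
    (fun _ _ => AEEqFun.smul_toGerm _ _) (fun _ _ => AEEqFun.smul_toGerm _ _)
    AEEqFun.pow_toGerm (fun _ => rfl) (fun _ => rfl)

/-- `L^∞(𝓕)`: the subring of essentially bounded random variables. -/
def Linf (μ : Measure Ω) : Subring (Ω →ₘ[μ] ℝ) where
  carrier := {ξ | ∃ c : ℝ, ∀ᵐ ω ∂μ, |ξ ω| ≤ c}
  zero_mem' := ⟨0, by filter_upwards [AEEqFun.coeFn_zero (β := ℝ) (μ := μ)] with ω h; simp [h]⟩
  one_mem' := ⟨1, by filter_upwards [AEEqFun.coeFn_one (β := ℝ) (μ := μ)] with ω h; simp [h]⟩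
  add_mem' := by
    rintro a b ⟨c, hc⟩ ⟨d, hd⟩
    exact ⟨c + d, by
      filter_upwards [AEEqFun.coeFn_add a b, hc, hd] with ω h1 h2 h3
      calc |(a + b) ω| = |a ω + b ω| := by rw [h1]; rfl
        _ ≤ |a ω| + |b ω| := abs_add_le _ _
        _ ≤ c + d := add_le_add h2 h3⟩
  mul_mem' := by
    rintro a b ⟨c, hc⟩ ⟨d, hd⟩
    exact ⟨|c| * |d|, by
      filter_upwards [AEEqFun.coeFn_mul a b, hc, hd] with ω h1 h2 h3
      calc |(a * b) ω| = |a ω * b ω| := by rw [h1]; rfl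
        _ = |a ω| * |b ω| := abs_mul _ _
        _ ≤ |c| * |d| :=
            mul_le_mul (h2.trans (le_abs_self c)) (h3.trans (le_abs_self d))
              (abs_nonneg _) (abs_nonneg _)⟩
  neg_mem' := by
    rintro a ⟨c, hc⟩
    exact ⟨c, by
      filter_upwards [AEEqFun.coeFn_neg a, hc] with ω h1 h2
      calc |(-a) ω| = |-(a ω)| := by rw [h1]; rfl
        _ = |a ω| := abs_neg _
        _ ≤ c := h2⟩

/-- the constant `c`, as an element of `L^∞`. -/
def LinfConst (μ : Measure Ω) (c : ℝ) : Linf μ :=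
  ⟨AEEqFun.const Ω c, |c|, by
    filter_upwards [AEEqFun.coeFn_const (α := Ω) (μ := μ) c] with ω h
    simp [h, Function.const]⟩

/-- the equivalence class `Ĩ_A` of the indicator function of a set `A`. -/
def indL0 (μ : Measure Ω) (A : Set Ω) (hA : MeasurableSet A) : Ω →ₘ[μ] ℝ :=
  AEEqFun.mk (A.indicator (1 : Ω → ℝ)) ((measurable_const.indicator hA).aestronglyMeasurable)

/-- a countable measurable partition of `Ω`. -/
structure MPartition (Ω : Type) [MeasurableSpace Ω] where
  A : ℕ → Set Ω
  meas : ∀ k, MeasurableSet (A k)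
  disj : ∀ m k, m ≠ k → A m ∩ A k = ∅
  cover : (⋃ k, A k) = Set.univ

/-- `Ĩ_{A_k}` for a member of a countable measurable partition. -/
def MPartition.ind (P : MPartition Ω) (μ : Measure Ω) (k : ℕ) : Ω →ₘ[μ] ℝ :=
  indL0 μ (P.A k) (P.meas k)

/-- `‖·‖` is an `L⁰`-norm making the `L⁰`-module `S` a random normed module. -/
structure IsRNNorm (μ : Measure Ω) {S : Type} [AddCommGroup S]
    [Module (Ω →ₘ[μ] ℝ) S] (n : S → Ω →ₘ[μ] ℝ) : Prop where
  nonneg : ∀ x, 0 ≤ n x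
  eq_zero_iff : ∀ x, n x = 0 ↔ x = 0
  norm_smul : ∀ (ξ : Ω →ₘ[μ] ℝ) (x : S), n (ξ • x) = |ξ| * n x
  norm_add_le : ∀ x y, n (x + y) ≤ n x + n y

/-- `‖·‖` is an `L^∞`-norm making the `L^∞`-module `E` an `L^∞`-normed module. -/
structure IsLinfNorm (μ : Measure Ω) {E : Type} [AddCommGroup E]
    [Module (Linf μ) E] (n : E → Ω →ₘ[μ] ℝ) : Prop where
  nonneg : ∀ x, 0 ≤ n x
  mem_Linf : ∀ x, n x ∈ Linf μ
  eq_zero_iff : ∀ x, n x = 0 ↔ x = 0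
  norm_smul : ∀ (ξ : Linf μ) (x : E), n (ξ • x) = |(ξ : Ω →ₘ[μ] ℝ)| * n x
  norm_add_le : ∀ x y, n (x + y) ≤ n x + n y

/-- the metric `d(x,y) = E[1 ∧ ‖x-y‖]` associated to an `L⁰`- (or `L^∞`-) norm. -/
def ndist {S : Type} [AddCommGroup S] (μ : Measure Ω) (n : S → Ω →ₘ[μ] ℝ) (x y : S) : ℝ :=
  ∫ ω, min 1 |n (x - y) ω| ∂μ

/-- the distance of convergence in probability on `L⁰`. -/
def dProb (μ : Measure Ω) (ξ η : Ω →ₘ[μ] ℝ) : ℝ := ∫ ω, min 1 |ξ ω - η ω| ∂μ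

/-- Cauchy property of a sequence with respect to a distance function. -/
def dCauchy {S : Type} (d : S → S → ℝ) (x : ℕ → S) : Prop :=
  ∀ ε > (0:ℝ), ∃ N : ℕ, ∀ m ≥ N, ∀ k ≥ N, d (x m) (x k) < ε

/-- convergence of a sequence with respect to a distance function. -/
def dTendsto {S : Type} (d : S → S → ℝ) (x : ℕ → S) (y : S) : Prop :=
  Tendsto (fun k => d (x k) y) atTop (nhds 0)

/-- completeness with respect to a distance function. -/
def dComplete {S : Type} (d : S → S → ℝ) : Prop :=
  ∀ x : ℕ → S, dCauchy d x → ∃ y, dTendsto d x y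

/-- a bundled complete-or-not random normed module over `L⁰(𝓕)`. -/
structure RNMod (Ω : Type) [MeasurableSpace Ω] (μ : Measure Ω) where
  carrier : Type
  acg : AddCommGroup carrier
  mod : @Module (Ω →ₘ[μ] ℝ) carrier _ acg.toAddCommMonoid
  rnorm : carrier → Ω →ₘ[μ] ℝ
  isRNNorm : IsRNNorm μ rnorm

attribute [instance] RNMod.acg RNMod.mod

/-- the metric of the `(ε,λ)`-topology of a random normed module. -/
def RNMod.dist (S : RNMod Ω μ) : S.carrier → S.carrier → ℝ := ndist μ S.rnorm

/-- completeness of a random normed module in the `(ε,λ)`-topology. -/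
def RNMod.Complete (S : RNMod Ω μ) : Prop := dComplete S.dist

/-- the essential supremum `‖ξ‖_∞` of (the absolute value of) a random variable. -/
def NinfV (μ : Measure Ω) (ξ : Ω →ₘ[μ] ℝ) : ℝ := essSup (fun ω => |ξ ω|) μ

/-- `T` is an `L^∞`-module homomorphism from `E` into (the `L^∞`-module underlying) `S`. -/
def IsLinfModHom (μ : Measure Ω) {E S : Type} [AddCommGroup E] [Module (Linf μ) E]
    [AddCommGroup S] [Module (Ω →ₘ[μ] ℝ) S] (T : E → S) : Prop :=
  (∀ x y, T (x + y) = T x + T y) ∧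
  (∀ (ξ : Linf μ) (x : E), T (ξ • x) = ((ξ : Ω →ₘ[μ] ℝ)) • T x)

/-- `S` together with `T` is an `L⁰`-extension of the `L^∞`-normed module `(E, n)`:
`S` is a complete random normed module, `T` is a norm-preserving `L^∞`-module
homomorphism with dense range. -/
def IsL0Extension (μ : Measure Ω) {E : Type} [AddCommGroup E] [Module (Linf μ) E]
    (n : E → Ω →ₘ[μ] ℝ) (S : RNMod Ω μ) (T : E → S.carrier) : Prop :=
  S.Complete ∧ IsLinfModHom μ T ∧ (∀ x, S.rnorm (T x) = n x) ∧
  (∀ y : S.carrier, ∀ ε > (0:ℝ), ∃ x : E, S.dist (T x) y < ε)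

/-- the set of elements of an `L⁰`-normed module with essentially bounded norm. -/
def LinfPart (μ : Measure Ω) {S : Type} (n : S → Ω →ₘ[μ] ℝ) : Set S := {x | n x ∈ Linf μ}

/-- convergence in probability of a sequence of random variables. -/
def TendstoInProb (μ : Measure Ω) (ξ : ℕ → Ω →ₘ[μ] ℝ) (l : Ω →ₘ[μ] ℝ) : Prop :=
  Tendsto (fun k => dProb μ (ξ k) l) atTop (nhds 0)

/-- the countable concatenation hull `H⁰_cc(E)` of a subset `E` of a random normed module. -/
def Hcc (S : RNMod Ω μ) (E : Set S.carrier) : Set S.carrier :=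
  {z | ∃ (x : ℕ → S.carrier) (P : MPartition Ω),
    (∀ k, x k ∈ E) ∧ ∀ k, P.ind μ k • z = P.ind μ k • x k}

/-- `L(E) = L⁰ * E`, the set of `L⁰`-multiples of elements of `E`. -/
def Lgen (S : RNMod Ω μ) (E : Set S.carrier) : Set S.carrier :=
  {z | ∃ (ξ : Ω →ₘ[μ] ℝ) (x : S.carrier), x ∈ E ∧ z = ξ • x}

/-- `f` is a continuous `L^∞`-module homomorphism from `(E, n)` to `L^∞`, i.e. a member of
the dual `L^∞`-normed module `E′`. -/
def IsLinfDual (μ : Measure Ω) {E : Type} [AddCommGroup E] [Module (Linf μ) E]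
    (n : E → Ω →ₘ[μ] ℝ) (f : E → Ω →ₘ[μ] ℝ) : Prop :=
  (∀ x, f x ∈ Linf μ) ∧ (∀ x y, f (x + y) = f x + f y) ∧
  (∀ (ξ : Linf μ) (x : E), f (ξ • x) = (ξ : Ω →ₘ[μ] ℝ) * f x) ∧
  (∀ ε > (0:ℝ), ∃ δ > (0:ℝ), ∀ x, NinfV μ (n x) < δ → NinfV μ (f x) < ε)

/-- `g` is a continuous `L⁰`-module homomorphism from `S` to `L⁰`, i.e. a member of the
random conjugate space `S^*`. -/
def IsRNDual (μ : Measure Ω) (S : RNMod Ω μ) (g : S.carrier → Ω →ₘ[μ] ℝ) : Prop :=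
  (∀ x y, g (x + y) = g x + g y) ∧ (∀ (ξ : Ω →ₘ[μ] ℝ) x, g (ξ • x) = ξ * g x) ∧
  (∀ ε > (0:ℝ), ∃ δ > (0:ℝ), ∀ x, ndist μ S.rnorm x 0 < δ → dProb μ (g x) 0 < ε)

/-- the set `{|f(x)| : ‖x‖ ≤ 1}` whose supremum in the lattice `L⁰` is the dual norm `‖f‖′`. -/
def dualBall {X : Type} (n : X → Ω →ₘ[μ] ℝ) (f : X → Ω →ₘ[μ] ℝ) : Set (Ω →ₘ[μ] ℝ) :=
  {t | ∃ x, n x ≤ 1 ∧ t = |f x|}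

/-! For `C ≥ 1` the pointwise inequality `1 ∧ uv ≤ C (1 ∧ v) + 1 ∧ (|u| - C)⁺` splits the bound
`‖ξa - ηb‖ ≤ |ξ| ‖a - b‖ + |ξ - η| ‖b‖` into `C` times the small distances `d(a, b)` and
`d_P(ξ, η)` plus the tails of `ξ` and `‖b‖` above level `C`. Sequences converging in
probability and `d`-Cauchy sequences have uniformly small tails above a large enough `C`, so
fixing such a `C` first and then letting the distances go to zero proves the second claim; the
first one is the second claim along the filter `atTop` of `ℕ × ℕ`. -/

theorem min_one_add_le {a b : ℝ} (ha : 0 ≤ a) (hb : 0 ≤ b) :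
    min 1 (a + b) ≤ min 1 a + min 1 b := by
  rcases le_total 1 a with h | h
  · linarith [min_le_left 1 (a + b), min_eq_left h, le_min zero_le_one hb]
  rcases le_total 1 b with h' | h'
  · linarith [min_le_left 1 (a + b), min_eq_left h', le_min zero_le_one ha]
  · rw [min_eq_right h, min_eq_right h']
    exact min_le_right _ _

theorem min_one_abs_mul_le {C : ℝ} (hC : 1 ≤ C) (u v : ℝ) :
    min 1 |u * v| ≤ C * min 1 |v| + min 1 |max (|u| - C) 0| := by
  set t := max (|u| - C) 0
  have ht0 : 0 ≤ t := le_max_right _ _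
  have hut : |u| ≤ C + t := by linarith [le_max_left (|u| - C) 0]
  have hrest : 0 ≤ min 1 |t| := le_min zero_le_one (abs_nonneg _)
  rcases le_total 1 |v| with hv | hv
  · rw [min_eq_left hv]
    linarith [min_le_left 1 |u * v|]
  rcases le_total 1 t with ht | ht
  · rw [abs_of_nonneg ht0, min_eq_left ht]
    nlinarith [min_le_left 1 |u * v|, le_min zero_le_one (abs_nonneg v)]
  · rw [min_eq_right hv, abs_of_nonneg ht0, min_eq_right ht, abs_mul]
    calc min 1 (|u| * |v|) ≤ |u| * |v| := min_le_right _ _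
      _ ≤ (C + t) * |v| := by gcongr
      _ ≤ C * |v| + t := by nlinarith [abs_nonneg v]

theorem max_abs_sub_le_add {f g h C : ℝ} (hfgh : |f| ≤ |g| + |h|) :
    max (|f| - C) 0 ≤ |g| + max (|h| - C) 0 :=
  max_le (by linarith [le_max_left (|h| - C) 0]) (by positivity)

def truncMean (μ : Measure Ω) (f : Ω → ℝ) : ℝ := ∫ ω, min 1 |f ω| ∂μ

def tailMean (μ : Measure Ω) (f : Ω → ℝ) (C : ℝ) : ℝ := truncMean μ fun ω => max (|f ω| - C) 0

def BoundedInProb (μ : Measure Ω) {ι : Type*} (f : ι → Ω →ₘ[μ] ℝ) : Prop :=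
  ∀ ε > 0, ∃ C, ∀ i, tailMean μ (f i) C ≤ ε

theorem truncMean_nonneg (f : Ω → ℝ) : 0 ≤ truncMean μ f :=
  integral_nonneg fun _ => le_min zero_le_one (abs_nonneg _)

theorem ndist_nonneg {E : Type} [AddCommGroup E] (n : E → Ω →ₘ[μ] ℝ) (a b : E) :
    0 ≤ ndist μ n a b :=
  truncMean_nonneg _

theorem tailMean_eq_zero {f : Ω → ℝ} {c C : ℝ} (hf : ∀ᵐ ω ∂μ, |f ω| ≤ c) (hcC : c ≤ C) :
    tailMean μ f C = 0 := by
  refine integral_eq_zero_of_ae ?_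
  filter_upwards [hf] with ω hω
  simp [max_eq_right (show |f ω| - C ≤ 0 by linarith)]

section FiniteMeasure

variable [IsFiniteMeasure μ]

theorem integrable_min_one_abs {f : Ω → ℝ} (hf : AEStronglyMeasurable f μ) :
    Integrable (fun ω => min 1 |f ω|) μ := by
  refine (integrable_const 1).mono' (by fun_prop) (Eventually.of_forall fun ω => ?_)
  rw [Real.norm_of_nonneg (le_min zero_le_one (abs_nonneg _))]
  exact min_le_left _ _

theorem truncMean_le_add_of_ae_le {f g h : Ω → ℝ} (hg : AEStronglyMeasurable g μ)
    (hh : AEStronglyMeasurable h μ) (hfgh : ∀ᵐ ω ∂μ, |f ω| ≤ |g ω| + |h ω|) :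
    truncMean μ f ≤ truncMean μ g + truncMean μ h := by
  rw [truncMean, truncMean, truncMean, ← integral_add (integrable_min_one_abs hg)
    (integrable_min_one_abs hh)]
  refine integral_mono_of_nonneg (Eventually.of_forall fun _ => le_min zero_le_one (abs_nonneg _))
    ((integrable_min_one_abs hg).add (integrable_min_one_abs hh)) ?_
  filter_upwards [hfgh] with ω hω
  exact (min_le_min_left 1 hω).trans (min_one_add_le (abs_nonneg _) (abs_nonneg _))

theorem truncMean_mul_le {u v : Ω → ℝ} (hu : AEStronglyMeasurable u μ)
    (hv : AEStronglyMeasurable v μ) {C : ℝ} (hC : 1 ≤ C) :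
    truncMean μ (fun ω => u ω * v ω) ≤ C * truncMean μ v + tailMean μ u C := by
  have hiv := (integrable_min_one_abs hv).const_mul C
  have hiu := integrable_min_one_abs (f := fun ω => max (|u ω| - C) 0) (by fun_prop)
  rw [tailMean, truncMean, truncMean, truncMean, ← integral_const_mul, ← integral_add hiv hiu]
  exact integral_mono_of_nonneg
    (Eventually.of_forall fun _ => le_min zero_le_one (abs_nonneg _)) (hiv.add hiu)
    (Eventually.of_forall fun ω => min_one_abs_mul_le hC (u ω) (v ω))

theorem tailMean_le_add_of_ae_le {f g h : Ω → ℝ} (hg : AEStronglyMeasurable g μ)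
    (hh : AEStronglyMeasurable h μ) (hfgh : ∀ᵐ ω ∂μ, |f ω| ≤ |g ω| + |h ω|) (C : ℝ) :
    tailMean μ f C ≤ truncMean μ g + tailMean μ h C := by
  refine truncMean_le_add_of_ae_le hg (by fun_prop) ?_
  filter_upwards [hfgh] with ω hω
  rw [abs_of_nonneg (le_max_right (|f ω| - C) 0), abs_of_nonneg (le_max_right (|h ω| - C) 0)]
  exact max_abs_sub_le_add hω

theorem tailMean_anti {f : Ω → ℝ} (hf : AEStronglyMeasurable f μ) {C C' : ℝ} (h : C ≤ C') :
    tailMean μ f C' ≤ tailMean μ f C := by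
  refine integral_mono_of_nonneg
    (Eventually.of_forall fun _ => le_min zero_le_one (abs_nonneg _))
    (integrable_min_one_abs (by fun_prop)) (Eventually.of_forall fun ω => ?_)
  dsimp only
  rw [abs_of_nonneg (le_max_right (|f ω| - C) 0), abs_of_nonneg (le_max_right (|f ω| - C') 0)]
  exact min_le_min_left 1 (max_le_max_right 0 (by linarith))

theorem dProb_le_add (ξ η ζ : Ω →ₘ[μ] ℝ) : dProb μ ξ η ≤ dProb μ ξ ζ + dProb μ η ζ :=
  truncMean_le_add_of_ae_le (f := fun ω => ξ ω - η ω) (by fun_prop) (by fun_prop)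
    (Eventually.of_forall fun ω => by
      simpa only [abs_abs, abs_sub_comm (η ω)] using abs_sub_le (ξ ω) (ζ ω) (η ω))

theorem tendsto_dProb {ι : Type*} {l : Filter ι} {ξ η : ι → Ω →ₘ[μ] ℝ} {ζ : Ω →ₘ[μ] ℝ}
    (hξ : Tendsto (fun i => dProb μ (ξ i) ζ) l (nhds 0))
    (hη : Tendsto (fun i => dProb μ (η i) ζ) l (nhds 0)) :
    Tendsto (fun i => dProb μ (ξ i) (η i)) l (nhds 0) :=
  squeeze_zero (fun _ => truncMean_nonneg _) (fun i => dProb_le_add _ _ ζ)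
    (by simpa using hξ.add hη)

end FiniteMeasure

theorem dCauchy_iff_tendsto {S : Type} {d : S → S → ℝ} (hd : ∀ a b, 0 ≤ d a b) {x : ℕ → S} :
    dCauchy d x ↔ Tendsto (fun p : ℕ × ℕ => d (x p.1) (x p.2)) atTop (nhds 0) := by
  simp only [Metric.tendsto_nhds, Real.dist_0_eq_abs, abs_of_nonneg (hd _ _),
    eventually_atTop_prod_self', dCauchy]

theorem BoundedInProb.comp {ι κ : Type*} {f : ι → Ω →ₘ[μ] ℝ} (hf : BoundedInProb μ f)
    (g : κ → ι) : BoundedInProb μ (f ∘ g) :=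
  fun ε hε => (hf ε hε).imp fun _ hC k => hC (g k)

theorem BoundedInProb.eventually_tailMean_le [IsFiniteMeasure μ] {ι : Type*}
    {f : ι → Ω →ₘ[μ] ℝ} (hf : BoundedInProb μ f) {ε : ℝ} (hε : 0 < ε) :
    ∀ᶠ C in atTop, ∀ i, tailMean μ (f i) C ≤ ε := by
  obtain ⟨C₀, hC₀⟩ := hf ε hε
  filter_upwards [eventually_ge_atTop C₀] with C hC i
  exact (tailMean_anti (f i).aestronglyMeasurable hC).trans (hC₀ i)

/-- Beyond some `N` the tails of `f m` are those of `f N` up to `E[1 ∧ |g m N|]`, and the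
finitely many `f k` with `k ≤ N` have no tail above their largest essential bound. -/
theorem boundedInProb_of_tendsto_truncMean [IsFiniteMeasure μ] {f : ℕ → Ω →ₘ[μ] ℝ}
    {g : ℕ → ℕ → Ω → ℝ} (hf : ∀ k, f k ∈ Linf μ) (hg : ∀ m k, AEStronglyMeasurable (g m k) μ)
    (hfg : ∀ m k, ∀ᵐ ω ∂μ, |f m ω| ≤ |g m k ω| + |f k ω|)
    (hg0 : Tendsto (fun p : ℕ × ℕ => truncMean μ (g p.1 p.2)) atTop (nhds 0)) :
    BoundedInProb μ f := by
  intro ε hε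
  obtain ⟨N, hN⟩ := eventually_atTop_prod_self'.1 (hg0.eventually (ge_mem_nhds hε))
  choose c hc using hf
  obtain ⟨C, hC⟩ := ((Set.finite_Iic N).image c).bddAbove
  have htail : ∀ k ≤ N, tailMean μ (f k) C = 0 := fun k hk =>
    tailMean_eq_zero (hc k) (hC ⟨k, hk, rfl⟩)
  refine ⟨C, fun m => ?_⟩
  rcases le_total m N with hm | hm
  · exact (htail m hm).le.trans hε.le
  · calc tailMean μ (f m) C ≤ truncMean μ (g m N) + tailMean μ (f N) C :=
          tailMean_le_add_of_ae_le (hg m N) (f N).aestronglyMeasurable (hfg m N) C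
      _ ≤ ε := by rw [htail N le_rfl, add_zero]; exact hN m hm N le_rfl

theorem TendstoInProb.tendsto_dProb_prod [IsFiniteMeasure μ] {ξ : ℕ → Ω →ₘ[μ] ℝ}
    {ξ₀ : Ω →ₘ[μ] ℝ} (hξ : TendstoInProb μ ξ ξ₀) :
    Tendsto (fun p : ℕ × ℕ => dProb μ (ξ p.1) (ξ p.2)) atTop (nhds 0) :=
  tendsto_dProb (hξ.comp (tendsto_fst.mono_left prod_atTop_atTop_eq.ge))
    (hξ.comp (tendsto_snd.mono_left prod_atTop_atTop_eq.ge))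

theorem boundedInProb_of_tendstoInProb [IsFiniteMeasure μ] {ξ : ℕ → Ω →ₘ[μ] ℝ}
    {ξ₀ : Ω →ₘ[μ] ℝ} (hb : ∀ k, ξ k ∈ Linf μ) (hξ : TendstoInProb μ ξ ξ₀) :
    BoundedInProb μ ξ :=
  boundedInProb_of_tendsto_truncMean (g := fun m k ω => ξ m ω - ξ k ω) hb (by fun_prop)
    (fun m k => Eventually.of_forall fun ω => by
      linarith [abs_sub_abs_le_abs_sub (ξ m ω) (ξ k ω)])
    hξ.tendsto_dProb_prod

namespace IsLinfNorm

variable {E : Type} [AddCommGroup E] [Module (Linf μ) E] {n : E → Ω →ₘ[μ] ℝ}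

theorem ae_nonneg (hn : IsLinfNorm μ n) (x : E) : ∀ᵐ ω ∂μ, 0 ≤ n x ω := by
  filter_upwards [AEEqFun.coeFn_le.2 (hn.nonneg x), AEEqFun.coeFn_zero (β := ℝ) (μ := μ)]
    with ω hω h0
  rwa [h0] at hω

theorem ae_le_add (hn : IsLinfNorm μ n) (x y : E) : ∀ᵐ ω ∂μ, n (x + y) ω ≤ n x ω + n y ω := by
  filter_upwards [AEEqFun.coeFn_le.2 (hn.norm_add_le x y), AEEqFun.coeFn_add (n x) (n y)]
    with ω hω hadd
  rwa [hadd] at hω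

theorem ae_smul_eq (hn : IsLinfNorm μ n) (ξ : Linf μ) (x : E) :
    ∀ᵐ ω ∂μ, n (ξ • x) ω = |(ξ : Ω →ₘ[μ] ℝ) ω| * n x ω := by
  filter_upwards [AEEqFun.coeFn_mul |(ξ : Ω →ₘ[μ] ℝ)| (n x),
    AEEqFun.coeFn_abs (ξ : Ω →ₘ[μ] ℝ)] with ω hmul habs
  rw [hn.norm_smul, hmul, Pi.mul_apply, habs]

theorem ae_abs_smul_sub_smul_le (hn : IsLinfNorm μ n) (ξ η : Linf μ) (a b : E) :
    ∀ᵐ ω ∂μ, |n (ξ • a - η • b) ω| ≤ |(ξ : Ω →ₘ[μ] ℝ) ω * n (a - b) ω| +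
      |n b ω * ((ξ : Ω →ₘ[μ] ℝ) ω - (η : Ω →ₘ[μ] ℝ) ω)| := by
  have hsplit : ξ • a - η • b = ξ • (a - b) + (ξ - η) • b := by module
  filter_upwards [hn.ae_le_add (ξ • (a - b)) ((ξ - η) • b), hn.ae_smul_eq ξ (a - b),
    hn.ae_smul_eq (ξ - η) b, AEEqFun.coeFn_sub (ξ : Ω →ₘ[μ] ℝ) η, hn.ae_nonneg (ξ • a - η • b),
    hn.ae_nonneg (a - b), hn.ae_nonneg b] with ω hle h1 h2 hsub h0 h0ab h0b
  rw [hsplit] at h0 ⊢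
  rw [h1, h2] at hle
  rw [show ((ξ - η : Linf μ) : Ω →ₘ[μ] ℝ) = ξ - η from rfl, hsub, Pi.sub_apply] at hle
  rwa [abs_of_nonneg h0, abs_mul, abs_mul, abs_of_nonneg h0ab, abs_of_nonneg h0b,
    mul_comm (n b ω)]

variable [IsFiniteMeasure μ]

theorem boundedInProb_of_dCauchy (hn : IsLinfNorm μ n) {x : ℕ → E}
    (hx : dCauchy (ndist μ n) x) : BoundedInProb μ (fun k => n (x k)) :=
  boundedInProb_of_tendsto_truncMean (g := fun m k => n (x m - x k)) (fun k => hn.mem_Linf _)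
    (fun _ _ => AEEqFun.aestronglyMeasurable _)
    (fun m k => by
      filter_upwards [hn.ae_le_add (x m - x k) (x k), hn.ae_nonneg (x m),
        hn.ae_nonneg (x m - x k), hn.ae_nonneg (x k)] with ω hle h0 h0' h0''
      rw [sub_add_cancel] at hle
      rwa [abs_of_nonneg h0, abs_of_nonneg h0', abs_of_nonneg h0''])
    ((dCauchy_iff_tendsto (ndist_nonneg n)).1 hx)

theorem ndist_smul_smul_le (hn : IsLinfNorm μ n) (ξ η : Linf μ) (a b : E) {C : ℝ}
    (hC : 1 ≤ C) :
    ndist μ n (ξ • a) (η • b) ≤ C * ndist μ n a b + tailMean μ (ξ : Ω →ₘ[μ] ℝ) C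
      + (C * dProb μ ξ η + tailMean μ (n b) C) := by
  calc ndist μ n (ξ • a) (η • b)
      ≤ truncMean μ (fun ω => (ξ : Ω →ₘ[μ] ℝ) ω * n (a - b) ω)
        + truncMean μ (fun ω => n b ω * ((ξ : Ω →ₘ[μ] ℝ) ω - (η : Ω →ₘ[μ] ℝ) ω)) :=
        truncMean_le_add_of_ae_le (by fun_prop) (by fun_prop)
          (hn.ae_abs_smul_sub_smul_le ξ η a b)
    _ ≤ _ := add_le_add (truncMean_mul_le (by fun_prop) (by fun_prop) hC)
        (truncMean_mul_le (by fun_prop) (by fun_prop) hC)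

theorem tendsto_ndist_smul_smul (hn : IsLinfNorm μ n) {ι : Type*} {l : Filter ι}
    {ξ η : ι → Linf μ} {a b : ι → E} (hξ : BoundedInProb μ (fun i => (ξ i : Ω →ₘ[μ] ℝ)))
    (hb : BoundedInProb μ (fun i => n (b i)))
    (hab : Tendsto (fun i => ndist μ n (a i) (b i)) l (nhds 0))
    (hξη : Tendsto (fun i => dProb μ (ξ i) (η i)) l (nhds 0)) :
    Tendsto (fun i => ndist μ n (ξ i • a i) (η i • b i)) l (nhds 0) := by
  refine tendsto_order.2 ⟨fun a ha => Eventually.of_forall fun i =>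
    ha.trans_le (ndist_nonneg n _ _), fun ε hε => ?_⟩
  have hε4 : 0 < ε / 4 := by positivity
  obtain ⟨C, hCξ, hCb, hC⟩ := ((hξ.eventually_tailMean_le hε4).and
    ((hb.eventually_tailMean_le hε4).and (eventually_ge_atTop 1))).exists
  have hδ : 0 < ε / (4 * C) := by positivity
  filter_upwards [hab.eventually (gt_mem_nhds hδ), hξη.eventually (gt_mem_nhds hδ)]
    with i hi hi'
  have hCδ : C * (ε / (4 * C)) = ε / 4 := by field_simp
  calc ndist μ n (ξ i • a i) (η i • b i)
      ≤ C * ndist μ n (a i) (b i) + tailMean μ (ξ i : Ω →ₘ[μ] ℝ) C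
        + (C * dProb μ (ξ i) (η i) + tailMean μ (n (b i)) C) :=
        hn.ndist_smul_smul_le (ξ i) (η i) (a i) (b i) hC
    _ < C * (ε / (4 * C)) + ε / 4 + (C * (ε / (4 * C)) + ε / 4) := by
        have hC0 : 0 < C := by linarith
        exact add_lt_add (add_lt_add_of_lt_of_le (by gcongr) (hCξ i))
          (add_lt_add_of_lt_of_le (by gcongr) (hCb i))
    _ = ε := by rw [hCδ]; ring

end IsLinfNorm

/-- if `{x_n}` is `d`-Cauchy in `E` and `{ξ_n} ⊆ L^∞` converges in
probability to `ξ ∈ L⁰`, then `{ξ_n x_n}` is `d`-Cauchy; moreover if `{η_n} ⊆ L^∞`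
also converges in probability to `ξ` and `{y_n}` is `d`-Cauchy with `d(x_n,y_n) → 0`,
then `d(ξ_n x_n, η_n y_n) → 0`. -/
theorem cauchy_smul_of_tendstoInProb
    {Ω : Type} [MeasurableSpace Ω] (μ : Measure Ω) [IsProbabilityMeasure μ]
    {E : Type} [AddCommGroup E] [Module (Linf μ) E]
    (n : E → Ω →ₘ[μ] ℝ) (hn : IsLinfNorm μ n)
    (x : ℕ → E) (hx : dCauchy (ndist μ n) x)
    (ξ : ℕ → Linf μ) (ξ₀ : Ω →ₘ[μ] ℝ)
    (hξ : TendstoInProb μ (fun k => (ξ k : Ω →ₘ[μ] ℝ)) ξ₀) :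
    dCauchy (ndist μ n) (fun k => ξ k • x k) ∧
    (∀ (η : ℕ → Linf μ), TendstoInProb μ (fun k => (η k : Ω →ₘ[μ] ℝ)) ξ₀ →
      ∀ (y : ℕ → E), dCauchy (ndist μ n) y →
        Tendsto (fun k => ndist μ n (x k) (y k)) atTop (nhds 0) →
        Tendsto (fun k => ndist μ n (ξ k • x k) (η k • y k)) atTop (nhds 0)) := by
  have hξb := boundedInProb_of_tendstoInProb (fun k => (ξ k).2) hξ
  refine ⟨?_, fun η hη y hy hxy =>
    hn.tendsto_ndist_smul_smul hξb (hn.boundedInProb_of_dCauchy hy) hxy (tendsto_dProb hξ hη)⟩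
  rw [dCauchy_iff_tendsto (ndist_nonneg n)]
  exact hn.tendsto_ndist_smul_smul (hξb.comp Prod.fst)
    ((hn.boundedInProb_of_dCauchy hx).comp Prod.snd)
    ((dCauchy_iff_tendsto (ndist_nonneg n)).1 hx) hξ.tendsto_dProb_prod
end
end

section
/- For every L^∞-normed module (E, ‖·‖) there exists a complete random normed module (E_0, ‖·‖_0) over L^0 and an L^∞-module homomorphism T : E → E_0 such that ‖T(x)‖_0 = ‖x‖ for all x ∈ E and T(E) is dense in E_0 with respect to the topology of convergence in probability of the L^0-norm. -/
open MeasureTheory Filter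
noncomputable section

variable {Ω : Type} [MeasurableSpace Ω] {μ : Measure Ω}

/-! The completion of `E` for the metric `E[1 ∧ ‖x - y‖]` is the required module.

`L⁰` with the F-norm `E[1 ∧ |ξ|]` is a complete normed lattice group with solid norm, so the
random norm, being uniformly continuous into `L⁰`, extends to the completion, and its defining
inequalities survive as closed conditions. The `L^∞`-action extends by uniform continuity.

For the `L⁰`-action the key estimate is `d(a • z, b • z) ≤ P(a ≠ b)` for `a, b ∈ L^∞`: on `E`,
`‖(a - b) • x‖ = |a - b| ‖x‖` vanishes off `{a ≠ b}`. Truncations `ξₘ` of `ξ ∈ L⁰` satisfy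
`P(ξₘ ≠ ξ) → 0`, hence `ξ • z := lim ξₘ • z` exists, `ξ ↦ ξ • z` is 1-Lipschitz for the
pseudometric `P(ξ ≠ ζ)`, and the module axioms and `‖ξ • z‖ = |ξ| ‖z‖` pass to the limit
from `L^∞`. -/

namespace L0Extension

open UniformSpace

theorem dComplete_dist {X : Type} [MetricSpace X] [CompleteSpace X] :
    dComplete (dist : X → X → ℝ) := fun _ hx =>
  let ⟨y, hy⟩ := cauchySeq_tendsto_of_complete (Metric.cauchySeq_iff.mpr hx)
  ⟨y, tendsto_iff_dist_tendsto_zero.mp hy⟩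

theorem min_one_abs_add_le (a b : ℝ) : min 1 |a + b| ≤ min 1 |a| + min 1 |b| := by
  rcases le_total 1 |a| with ha | ha <;> rcases le_total 1 |b| with hb | hb <;>
    simp only [min_eq_left, min_eq_right, ha, hb] <;>
    linarith [abs_add_le a b, min_le_left 1 |a + b|, min_le_right 1 |a + b|, abs_nonneg a,
      abs_nonneg b]

instance : IsOrderedAddMonoid (Ω →ₘ[μ] ℝ) where
  add_le_add_left a b h c := by
    rw [← AEEqFun.coeFn_le] at h ⊢
    filter_upwards [h, AEEqFun.coeFn_add a c, AEEqFun.coeFn_add b c] with ω h h1 h2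
    simp only [h1, h2, Pi.add_apply]
    linarith

theorem exists_nat_ae_abs_le_of_mem_Linf {α : Ω →ₘ[μ] ℝ} (hα : α ∈ Linf μ) :
    ∃ k : ℕ, ∀ᵐ ω ∂μ, |α ω| ≤ k := by
  obtain ⟨c, hc⟩ := hα
  obtain ⟨k, hk⟩ := exists_nat_ge c
  exact ⟨k, hc.mono fun ω h => h.trans hk⟩

theorem abs_mem_Linf {α : Ω →ₘ[μ] ℝ} (hα : α ∈ Linf μ) : |α| ∈ Linf μ := by
  obtain ⟨c, hc⟩ := hα
  exact ⟨c, by filter_upwards [hc, AEEqFun.coeFn_abs α] with ω h1 h2; rwa [h2, abs_abs]⟩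

theorem _root_.IsLinfNorm.map_neg {E : Type} [AddCommGroup E] [Module (Linf μ) E]
    {n : E → Ω →ₘ[μ] ℝ} (hn : IsLinfNorm μ n) (x : E) : n (-x) = n x := by
  have habs : |((-1 : Linf μ) : Ω →ₘ[μ] ℝ)| = 1 := by
    refine AEEqFun.ext ?_
    filter_upwards [AEEqFun.coeFn_abs ((-1 : Linf μ) : Ω →ₘ[μ] ℝ),
      AEEqFun.coeFn_neg (1 : Ω →ₘ[μ] ℝ), AEEqFun.coeFn_one (β := ℝ) (μ := μ)] with ω h1 h2 h3
    rw [h1]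
    change |(-1 : Ω →ₘ[μ] ℝ) ω| = (1 : Ω →ₘ[μ] ℝ) ω
    simp [h2, h3]
  rw [← neg_one_smul (Linf μ) x, hn.norm_smul, habs, one_mul]

def truncFun (m : ℕ) (r : ℝ) : ℝ := max (-m) (min r m)

theorem continuous_truncFun (m : ℕ) : Continuous (truncFun m) := by unfold truncFun; fun_prop

def truncate (ξ : Ω →ₘ[μ] ℝ) (m : ℕ) : Linf μ :=
  ⟨ξ.comp (truncFun m) (continuous_truncFun m), m, by
    filter_upwards [AEEqFun.coeFn_comp _ (continuous_truncFun m) ξ] with ω h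
    rw [h, abs_le]
    exact ⟨le_max_left _ _, max_le (by simp) (min_le_right _ _)⟩⟩

def disagreement (μ : Measure Ω) (ξ η : Ω →ₘ[μ] ℝ) : ℝ := μ.real {ω | ξ ω ≠ η ω}

theorem disagreement_comm (ξ η : Ω →ₘ[μ] ℝ) : disagreement μ ξ η = disagreement μ η ξ := by
  simp only [disagreement, ne_comm]

variable [IsFiniteMeasure μ]

section ConvergenceInProbability

theorem integrable_min_one_abs (ξ : Ω →ₘ[μ] ℝ) : Integrable (fun ω => min 1 |ξ ω|) μ :=
  (integrable_const 1).mono' ((continuous_const.min continuous_abs).comp_aestronglyMeasurable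
    ξ.aestronglyMeasurable) (.of_forall fun ω => by simp [abs_of_nonneg])

variable (μ) in
def probNorm : AddGroupNorm (Ω →ₘ[μ] ℝ) where
  toFun ξ := ∫ ω, min 1 |ξ ω| ∂μ
  map_zero' := by
    rw [integral_congr_ae ((AEEqFun.coeFn_zero (β := ℝ) (μ := μ)).mono fun ω h =>
      show min 1 |_| = (0 : ℝ) by simp [h])]
    simp
  add_le' ξ η := by
    rw [← integral_add (integrable_min_one_abs ξ) (integrable_min_one_abs η)]
    refine integral_mono_ae (integrable_min_one_abs _)
      ((integrable_min_one_abs ξ).add (integrable_min_one_abs η)) ?_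
    filter_upwards [AEEqFun.coeFn_add ξ η] with ω h
    simpa [h] using min_one_abs_add_le (ξ ω) (η ω)
  neg' ξ := integral_congr_ae ((AEEqFun.coeFn_neg ξ).mono fun ω h => by simp [h])
  eq_zero_of_map_eq_zero' ξ h := by
    have h0 := (integral_eq_zero_iff_of_nonneg (fun ω => by positivity)
      (integrable_min_one_abs ξ)).mp h
    refine AEEqFun.ext ?_
    filter_upwards [h0, AEEqFun.coeFn_zero (β := ℝ) (μ := μ)] with ω h1 h2
    rw [h2, Pi.zero_apply]
    by_contra hne
    exact (lt_min one_pos (abs_pos.mpr hne)).ne' (by simpa using h1)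

/-- `‖ξ‖ = E[1 ∧ |ξ|]` is not homogeneous, which a `NormedAddCommGroup` does not require; its
metric is that of convergence in probability. -/
instance : NormedAddCommGroup (Ω →ₘ[μ] ℝ) := (probNorm μ).toNormedAddCommGroup

theorem norm_eq_integral (ξ : Ω →ₘ[μ] ℝ) : ‖ξ‖ = ∫ ω, min 1 |ξ ω| ∂μ := rfl

instance : HasSolidNorm (Ω →ₘ[μ] ℝ) where
  solid ξ η h := by
    rw [← AEEqFun.coeFn_le] at h
    refine integral_mono_ae (integrable_min_one_abs _) (integrable_min_one_abs _) ?_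
    filter_upwards [h, AEEqFun.coeFn_abs ξ, AEEqFun.coeFn_abs η] with ω h h1 h2
    simp only [h1, h2] at h
    exact min_le_min le_rfl h

theorem norm_le_measureReal_ne_zero (ξ : Ω →ₘ[μ] ℝ) : ‖ξ‖ ≤ μ.real {ω | ξ ω ≠ 0} := by
  have hs : MeasurableSet {ω | ξ ω ≠ 0} :=
    (measurableSet_eq_fun ξ.measurable measurable_const).compl
  rw [norm_eq_integral, ← integral_indicator_one hs]
  refine integral_mono (integrable_min_one_abs ξ) ((integrable_const 1).indicator hs) fun ω => ?_
  by_cases h : ξ ω = 0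
  · simp [h]
  · simp [Set.indicator_of_mem (show ω ∈ {ω | ξ ω ≠ 0} from h)]

theorem mul_measureReal_le_norm (ξ : Ω →ₘ[μ] ℝ) {ε : ℝ} (hε : ε ≤ 1) :
    ε * μ.real {ω | ε ≤ |ξ ω|} ≤ ‖ξ‖ := by
  have h := mul_meas_ge_le_integral_of_nonneg (.of_forall fun ω => by positivity)
    (integrable_min_one_abs ξ) ε
  rw [norm_eq_integral]
  simpa [le_min_iff, hε] using h

theorem tendsto_of_ae_tendsto {u : ℕ → Ω →ₘ[μ] ℝ} {ξ : Ω →ₘ[μ] ℝ}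
    (h : ∀ᵐ ω ∂μ, Tendsto (fun k => u k ω) atTop (nhds (ξ ω))) :
    Tendsto u atTop (nhds ξ) := by
  rw [tendsto_iff_norm_sub_tendsto_zero]
  simp only [norm_eq_integral]
  have h0 : (0 : ℝ) = ∫ _, min 1 |(0 : ℝ)| ∂μ := by simp
  rw [h0]
  refine tendsto_integral_of_dominated_convergence (fun _ => 1)
    (fun k => (integrable_min_one_abs _).aestronglyMeasurable) (integrable_const 1)
    (fun k => .of_forall fun ω => by simp [abs_of_nonneg]) ?_
  filter_upwards [h, ae_all_iff.mpr fun k => AEEqFun.coeFn_sub (u k) ξ] with ω hω hsub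
  simp only [hsub, Pi.sub_apply]
  exact ((continuous_const.min continuous_abs).tendsto 0).comp
    (by simpa using hω.sub_const (ξ ω))

theorem ae_cauchySeq_of_norm_sub_lt {u : ℕ → Ω →ₘ[μ] ℝ}
    (hu : ∀ k, ‖u (k + 1) - u k‖ < (1 / 4) ^ k) :
    ∀ᵐ ω ∂μ, CauchySeq fun k => u k ω := by
  set s : ℕ → Set Ω := fun k => {ω | (1 / 2) ^ k ≤ |(u (k + 1) - u k) ω|}
  have hs : ∀ k, μ.real (s k) ≤ (1 / 2) ^ k := fun k => by
    refine le_of_mul_le_mul_left ?_ (pow_pos (by norm_num : (0 : ℝ) < 1 / 2) k)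
    calc (1 / 2) ^ k * μ.real (s k)
        ≤ ‖u (k + 1) - u k‖ := mul_measureReal_le_norm _ (pow_le_one₀ (by norm_num) (by norm_num))
      _ ≤ (1 / 4) ^ k := (hu k).le
      _ = (1 / 2) ^ k * (1 / 2) ^ k := by rw [← mul_pow]; norm_num
  have hsum : ∑' k, μ (s k) ≠ ⊤ := by
    refine ne_top_of_le_ne_top (b := ∑' k : ℕ, ENNReal.ofReal ((1 / 2) ^ k)) ?_
      (ENNReal.tsum_le_tsum fun k => ?_)
    · rw [← ENNReal.ofReal_tsum_of_nonneg (fun k => by positivity)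
        (summable_geometric_of_lt_one (by norm_num) (by norm_num))]
      exact ENNReal.ofReal_ne_top
    · rw [← ofReal_measureReal]
      exact ENNReal.ofReal_le_ofReal (hs k)
  filter_upwards [ae_eventually_notMem hsum,
    ae_all_iff.mpr fun k => AEEqFun.coeFn_sub (u (k + 1)) (u k)] with ω hω hsub
  refine cauchySeq_of_summable_dist (Summable.of_norm_bounded_eventually_nat
    (summable_geometric_of_lt_one (by norm_num : (0 : ℝ) ≤ 1 / 2) (by norm_num)) ?_)
  filter_upwards [hω] with k hk
  simp only [s, Set.mem_ofPred_eq, not_le, hsub, Pi.sub_apply] at hk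
  rw [Real.norm_eq_abs, abs_of_nonneg dist_nonneg, dist_comm, Real.dist_eq]
  exact hk.le

instance : CompleteSpace (Ω →ₘ[μ] ℝ) := by
  refine Metric.complete_of_convergent_controlled_sequences (fun k => (1 / 4) ^ k)
    (fun k => by positivity) fun u hu => ?_
  have hcauchy := ae_cauchySeq_of_norm_sub_lt fun k => by
    simpa [dist_eq_norm] using hu k (k + 1) k (by omega) le_rfl
  obtain ⟨f, hf, hlim⟩ := measurable_limit_of_tendsto_metrizable_ae
    (fun k => (u k).aemeasurable) (hcauchy.mono fun ω h => cauchySeq_tendsto_of_complete h)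
  refine ⟨AEEqFun.mk f hf.aestronglyMeasurable, tendsto_of_ae_tendsto ?_⟩
  filter_upwards [hlim, AEEqFun.coeFn_mk f hf.aestronglyMeasurable] with ω h1 h2
  rwa [h2]

theorem norm_mul_le_of_ae_abs_le {α : Ω →ₘ[μ] ℝ} {k : ℕ} (hα : ∀ᵐ ω ∂μ, |α ω| ≤ k)
    (ξ : Ω →ₘ[μ] ℝ) : ‖α * ξ‖ ≤ k * ‖ξ‖ := by
  refine (norm_le_norm_of_abs_le_abs ?_).trans (norm_nsmul_le (n := k) (a := ξ))
  rw [← AEEqFun.coeFn_le]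
  filter_upwards [hα, AEEqFun.coeFn_abs (α * ξ), AEEqFun.coeFn_abs (k • ξ),
    AEEqFun.coeFn_mul α ξ, AEEqFun.coeFn_smul k ξ] with ω hω h1 h2 h3 h4
  rw [h1, h2, h3, h4]
  simp only [Pi.mul_apply, Pi.smul_apply, nsmul_eq_mul, abs_mul, Nat.abs_cast]
  exact mul_le_mul_of_nonneg_right hω (abs_nonneg _)

theorem continuous_mul_left_of_mem_Linf {α : Ω →ₘ[μ] ℝ} (hα : α ∈ Linf μ) :
    Continuous (α * ·) := by
  obtain ⟨k, hk⟩ := exists_nat_ae_abs_le_of_mem_Linf hα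
  exact AddMonoidHomClass.continuous_of_bound (AddMonoidHom.mulLeft α) k
    (norm_mul_le_of_ae_abs_le hk)

end ConvergenceInProbability

section Disagreement

theorem measureReal_mono_of_ae {s t : Set Ω} (h : ∀ᵐ ω ∂μ, ω ∈ s → ω ∈ t) :
    μ.real s ≤ μ.real t :=
  ENNReal.toReal_mono (measure_ne_top μ _) (measure_mono_ae h)

theorem disagreement_le_of_ae {ξ η ξ₁ η₁ : Ω →ₘ[μ] ℝ}
    (h : ∀ᵐ ω ∂μ, ξ₁ ω = η₁ ω → ξ ω = η ω) : disagreement μ ξ η ≤ disagreement μ ξ₁ η₁ :=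
  measureReal_mono_of_ae (h.mono fun _ h => mt h)

theorem disagreement_le_add_of_ae {ξ η ξ₁ η₁ ξ₂ η₂ : Ω →ₘ[μ] ℝ}
    (h : ∀ᵐ ω ∂μ, ξ₁ ω = η₁ ω → ξ₂ ω = η₂ ω → ξ ω = η ω) :
    disagreement μ ξ η ≤ disagreement μ ξ₁ η₁ + disagreement μ ξ₂ η₂ := by
  refine (measureReal_mono_of_ae (h.mono fun ω h hne => ?_)).trans (measureReal_union_le _ _)
  by_contra hmem
  simp only [Set.mem_union, Set.mem_ofPred_eq, not_or, not_not] at hmem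
  exact hne (h hmem.1 hmem.2)

theorem disagreement_triangle (ξ η ζ : Ω →ₘ[μ] ℝ) :
    disagreement μ ξ ζ ≤ disagreement μ ξ η + disagreement μ η ζ :=
  disagreement_le_add_of_ae (.of_forall fun _ h1 h2 => h1.trans h2)

theorem disagreement_add_add_le (ξ η ξ' η' : Ω →ₘ[μ] ℝ) :
    disagreement μ (ξ + η) (ξ' + η') ≤ disagreement μ ξ ξ' + disagreement μ η η' :=
  disagreement_le_add_of_ae <| by
    filter_upwards [AEEqFun.coeFn_add ξ η, AEEqFun.coeFn_add ξ' η'] with ω h h' h1 h2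
    simp [h, h', h1, h2]

theorem disagreement_mul_right_le (ξ ξ' η : Ω →ₘ[μ] ℝ) :
    disagreement μ (ξ * η) (ξ' * η) ≤ disagreement μ ξ ξ' :=
  disagreement_le_of_ae <| by
    filter_upwards [AEEqFun.coeFn_mul ξ η, AEEqFun.coeFn_mul ξ' η] with ω h h' h1
    simp [h, h', h1]

theorem disagreement_mul_left_le (α ξ ξ' : Ω →ₘ[μ] ℝ) :
    disagreement μ (α * ξ) (α * ξ') ≤ disagreement μ ξ ξ' := by
  simpa only [mul_comm α] using disagreement_mul_right_le ξ ξ' α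

theorem disagreement_abs_abs_le (ξ ξ' : Ω →ₘ[μ] ℝ) :
    disagreement μ |ξ| |ξ'| ≤ disagreement μ ξ ξ' :=
  disagreement_le_of_ae <| by
    filter_upwards [AEEqFun.coeFn_abs ξ, AEEqFun.coeFn_abs ξ'] with ω h h' h1
    simp [h, h', h1]

theorem dist_le_disagreement (ξ η : Ω →ₘ[μ] ℝ) : dist ξ η ≤ disagreement μ ξ η := by
  refine (dist_eq_norm ξ η ▸ norm_le_measureReal_ne_zero (ξ - η)).trans_eq
    (measureReal_congr (eventuallyEq_set.mpr ?_))
  filter_upwards [AEEqFun.coeFn_sub ξ η] with ω h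
  simp only [h, Pi.sub_apply, sub_ne_zero]

theorem tendsto_disagreement_truncate (ξ : Ω →ₘ[μ] ℝ) :
    Tendsto (fun m => disagreement μ (truncate ξ m) ξ) atTop (nhds 0) := by
  set s : ℕ → Set Ω := fun m => {ω | (m : ℝ) < |ξ ω|}
  have hle : ∀ m, disagreement μ (truncate ξ m) ξ ≤ μ.real (s m) := fun m => by
    refine measureReal_mono_of_ae ?_
    filter_upwards [AEEqFun.coeFn_comp _ (continuous_truncFun m) ξ] with ω h hne
    by_contra hle
    simp only [s, Set.mem_ofPred_eq, not_lt, abs_le] at hle hne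
    exact hne (by rw [truncate, h]; simp [truncFun, hle.1, hle.2])
  have hs : Tendsto (fun m => μ (s m)) atTop (nhds 0) := by
    have hanti : Antitone s := fun m k hmk ω (hω : (k : ℝ) < _) =>
      lt_of_le_of_lt (by exact_mod_cast hmk) hω
    have hempty : ⋂ m, s m = ∅ := Set.eq_empty_of_forall_notMem fun ω hω => by
      obtain ⟨m, hm⟩ := exists_nat_ge |ξ ω|
      exact (Set.mem_iInter.mp hω m).not_ge hm
    simpa [s, hempty, Function.comp_def] using tendsto_measure_iInter_atTop
      (fun m => (measurableSet_lt measurable_const ξ.measurable.abs).nullMeasurableSet) hanti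
      ⟨0, measure_ne_top μ _⟩
  exact squeeze_zero (fun _ => measureReal_nonneg) hle
    (by simpa [Function.comp_def, measureReal_def] using
      (ENNReal.tendsto_toReal ENNReal.zero_ne_top).comp hs)

end Disagreement

section Completion

variable {E : Type} [AddCommGroup E] [Module (Linf μ) E] {n : E → Ω →ₘ[μ] ℝ}

theorem _root_.IsLinfNorm.dist_le (hn : IsLinfNorm μ n) (x y : E) :
    dist (n x) (n y) ≤ ‖n (x - y)‖ := by
  rw [dist_eq_norm]
  refine norm_le_norm_of_abs_le_abs ?_
  rw [abs_of_nonneg (hn.nonneg (x - y)), abs_le', neg_sub, sub_le_iff_le_add, sub_le_iff_le_add]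
  constructor
  · simpa using hn.norm_add_le (x - y) y
  · simpa [← hn.map_neg (x - y)] using hn.norm_add_le (y - x) x

def _root_.IsLinfNorm.toAddGroupNorm (hn : IsLinfNorm μ n) : AddGroupNorm E where
  toFun x := ‖n x‖
  map_zero' := by rw [(hn.eq_zero_iff 0).mpr rfl, norm_zero]
  add_le' x y := (norm_le_norm_of_abs_le_abs (by
      rw [abs_of_nonneg (hn.nonneg (x + y)),
        abs_of_nonneg (add_nonneg (hn.nonneg x) (hn.nonneg y))]
      exact hn.norm_add_le x y)).trans (norm_add_le _ _)
  neg' x := by rw [hn.map_neg]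
  eq_zero_of_map_eq_zero' x h := (hn.eq_zero_iff x).mp (norm_eq_zero.mp h)

variable (n) in
def WithL0Norm (_hn : IsLinfNorm μ n) : Type := E

namespace WithL0Norm

variable (hn : IsLinfNorm μ n)

instance : AddCommGroup (WithL0Norm n hn) := ‹AddCommGroup E›
instance : Module (Linf μ) (WithL0Norm n hn) := ‹Module (Linf μ) E›
instance : NormedAddCommGroup (WithL0Norm n hn) := hn.toAddGroupNorm.toNormedAddCommGroup

theorem norm_def (x : WithL0Norm n hn) : ‖x‖ = ‖n x‖ := rfl

instance : UniformContinuousConstSMul (Linf μ) (WithL0Norm n hn) where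
  uniformContinuous_const_smul a := by
    obtain ⟨k, hk⟩ := exists_nat_ae_abs_le_of_mem_Linf (abs_mem_Linf a.2)
    refine AddMonoidHomClass.uniformContinuous_of_bound (DistribSMul.toAddMonoidHom _ a) k
      fun x => ?_
    exact (congrArg norm (hn.norm_smul a x)).trans_le (norm_mul_le_of_ae_abs_le hk (n x))

theorem uniformContinuous_randomNorm : UniformContinuous fun x : WithL0Norm n hn => n x :=
  LipschitzWith.uniformContinuous (K := 1) <| LipschitzWith.of_dist_le_mul fun x y => by
    rw [NNReal.coe_one, one_mul, dist_eq_norm x y]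
    exact hn.dist_le x y

end WithL0Norm

variable (hn : IsLinfNorm μ n)

def extendedNorm : Completion (WithL0Norm n hn) → Ω →ₘ[μ] ℝ :=
  Completion.extension fun x : WithL0Norm n hn => n x

theorem extendedNorm_coe (x : WithL0Norm n hn) : extendedNorm hn x = n x :=
  Completion.extension_coe (WithL0Norm.uniformContinuous_randomNorm hn) x

theorem continuous_extendedNorm : Continuous (extendedNorm hn) :=
  Completion.continuous_extension

theorem norm_eq_norm_extendedNorm (z : Completion (WithL0Norm n hn)) :
    ‖z‖ = ‖extendedNorm hn z‖ := by
  refine Completion.induction_on z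
    (isClosed_eq continuous_norm (continuous_extendedNorm hn).norm) fun x => ?_
  rw [Completion.norm_coe, extendedNorm_coe, WithL0Norm.norm_def]

theorem ndist_extendedNorm (z w : Completion (WithL0Norm n hn)) :
    ndist μ (extendedNorm hn) z w = dist z w := by
  rw [dist_eq_norm, norm_eq_norm_extendedNorm]
  rfl

theorem extendedNorm_nonneg (z : Completion (WithL0Norm n hn)) : 0 ≤ extendedNorm hn z :=
  Completion.induction_on z (isClosed_le continuous_const (continuous_extendedNorm hn))
    fun x => (extendedNorm_coe hn x).symm ▸ hn.nonneg x

theorem extendedNorm_add_le (z w : Completion (WithL0Norm n hn)) :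
    extendedNorm hn (z + w) ≤ extendedNorm hn z + extendedNorm hn w := by
  have hN := continuous_extendedNorm hn
  refine Completion.induction_on₂ z w (isClosed_le (hN.comp continuous_add)
    ((hN.comp continuous_fst).add (hN.comp continuous_snd))) fun x y => ?_
  rw [← Completion.coe_add, extendedNorm_coe, extendedNorm_coe, extendedNorm_coe]
  exact hn.norm_add_le x y

theorem extendedNorm_eq_zero_iff (z : Completion (WithL0Norm n hn)) :
    extendedNorm hn z = 0 ↔ z = 0 := by
  rw [← norm_eq_zero, ← norm_eq_zero (a := z), norm_eq_norm_extendedNorm]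

theorem extendedNorm_Linf_smul (a : Linf μ) (z : Completion (WithL0Norm n hn)) :
    extendedNorm hn (a • z) = |(a : Ω →ₘ[μ] ℝ)| * extendedNorm hn z := by
  have hN := continuous_extendedNorm hn
  refine Completion.induction_on z (isClosed_eq (hN.comp (continuous_const_smul a))
    ((continuous_mul_left_of_mem_Linf (abs_mem_Linf a.2)).comp hN)) fun x => ?_
  rw [← Completion.coe_smul, extendedNorm_coe, extendedNorm_coe]
  exact hn.norm_smul a x

theorem dist_Linf_smul_le (a b : Linf μ) (z : Completion (WithL0Norm n hn)) :
    dist (a • z) (b • z) ≤ disagreement μ a b := by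
  rw [dist_eq_norm, ← sub_smul, norm_eq_norm_extendedNorm, extendedNorm_Linf_smul,
    ← dist_zero_right]
  refine (dist_le_disagreement _ _).trans (disagreement_le_of_ae ?_)
  filter_upwards [AEEqFun.coeFn_mul |((a - b : Linf μ) : Ω →ₘ[μ] ℝ)| (extendedNorm hn z),
    AEEqFun.coeFn_abs ((a - b : Linf μ) : Ω →ₘ[μ] ℝ),
    AEEqFun.coeFn_sub (a : Ω →ₘ[μ] ℝ) b, AEEqFun.coeFn_zero (β := ℝ) (μ := μ)]
    with ω h1 h2 h3 h4 hab
  rw [h1, Pi.mul_apply, h2, h4]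
  change |((a : Ω →ₘ[μ] ℝ) - b) ω| * _ = 0
  simp [h3, hab]

theorem cauchySeq_truncate_smul (ξ : Ω →ₘ[μ] ℝ) (z : Completion (WithL0Norm n hn)) :
    CauchySeq fun m => truncate ξ m • z := by
  refine Metric.cauchySeq_iff'.mpr fun ε hε => ?_
  obtain ⟨N, hN⟩ := eventually_atTop.mp
    ((tendsto_order.mp (tendsto_disagreement_truncate ξ)).2 (ε / 2) (half_pos hε))
  refine ⟨N, fun m hm => (dist_Linf_smul_le hn _ _ z).trans_lt ?_⟩
  calc disagreement μ (truncate ξ m) (truncate ξ N)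
      ≤ disagreement μ (truncate ξ m) ξ + disagreement μ ξ (truncate ξ N) :=
        disagreement_triangle _ _ _
    _ < ε / 2 + ε / 2 := by
        rw [disagreement_comm ξ]
        exact add_lt_add (hN m hm) (hN N le_rfl)
    _ = ε := add_halves ε

instance : SMul (Ω →ₘ[μ] ℝ) (Completion (WithL0Norm n hn)) where
  smul ξ z := limUnder atTop fun m => truncate ξ m • z

theorem tendsto_truncate_smul (ξ : Ω →ₘ[μ] ℝ) (z : Completion (WithL0Norm n hn)) :
    Tendsto (fun m => truncate ξ m • z) atTop (nhds (ξ • z)) :=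
  (cauchySeq_truncate_smul hn ξ z).tendsto_limUnder

theorem dist_smul_le (ξ ζ : Ω →ₘ[μ] ℝ) (z : Completion (WithL0Norm n hn)) :
    dist (ξ • z) (ζ • z) ≤ disagreement μ ξ ζ := by
  refine le_of_tendsto_of_tendsto' ((tendsto_truncate_smul hn ξ z).dist
    (tendsto_truncate_smul hn ζ z)) (g := fun m => disagreement μ (truncate ξ m) ξ +
      disagreement μ ξ ζ + disagreement μ (truncate ζ m) ζ) ?_ fun m => ?_
  · simpa using ((tendsto_disagreement_truncate ξ).add_const _).add
      (tendsto_disagreement_truncate ζ)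
  · refine (dist_Linf_smul_le hn _ _ z).trans ?_
    rw [disagreement_comm (truncate ζ m : Ω →ₘ[μ] ℝ)]
    exact (disagreement_triangle _ ζ _).trans
      (add_le_add_left (disagreement_triangle _ ξ _) _)

theorem tendsto_smul_of_disagreement {ζ : ℕ → Ω →ₘ[μ] ℝ} {ξ : Ω →ₘ[μ] ℝ}
    (h : Tendsto (fun m => disagreement μ (ζ m) ξ) atTop (nhds 0))
    (z : Completion (WithL0Norm n hn)) : Tendsto (fun m => ζ m • z) atTop (nhds (ξ • z)) :=
  tendsto_iff_dist_tendsto_zero.mpr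
    (squeeze_zero (fun _ => dist_nonneg) (fun _ => dist_smul_le hn _ _ z) h)

theorem coe_Linf_smul (a : Linf μ) (z : Completion (WithL0Norm n hn)) :
    (a : Ω →ₘ[μ] ℝ) • z = a • z := by
  refine tendsto_nhds_unique (tendsto_truncate_smul hn a z) (tendsto_iff_dist_tendsto_zero.mpr ?_)
  exact squeeze_zero (fun _ => dist_nonneg)
    (fun m => dist_Linf_smul_le hn (truncate a m) a z)
    (tendsto_disagreement_truncate (a : Ω →ₘ[μ] ℝ))

theorem L0_smul_add (ξ : Ω →ₘ[μ] ℝ) (z w : Completion (WithL0Norm n hn)) :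
    ξ • (z + w) = ξ • z + ξ • w :=
  tendsto_nhds_unique (tendsto_truncate_smul hn ξ (z + w)) <| by
    simpa only [smul_add] using
      (tendsto_truncate_smul hn ξ z).add (tendsto_truncate_smul hn ξ w)

theorem L0_add_smul (ξ η : Ω →ₘ[μ] ℝ) (z : Completion (WithL0Norm n hn)) :
    (ξ + η) • z = ξ • z + η • z := by
  have hsum := (tendsto_disagreement_truncate ξ).add (tendsto_disagreement_truncate η)
  rw [add_zero] at hsum
  have h := tendsto_smul_of_disagreement hn (ζ := fun m => ((truncate ξ m + truncate η m :
    Linf μ) : Ω →ₘ[μ] ℝ)) (squeeze_zero (fun _ => measureReal_nonneg)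
      (fun m => disagreement_add_add_le _ _ _ _) hsum) z
  simp only [coe_Linf_smul, add_smul] at h
  exact tendsto_nhds_unique h ((tendsto_truncate_smul hn ξ z).add (tendsto_truncate_smul hn η z))

theorem Linf_smul_L0_smul (a : Linf μ) (ξ : Ω →ₘ[μ] ℝ) (z : Completion (WithL0Norm n hn)) :
    a • ξ • z = ((a : Ω →ₘ[μ] ℝ) * ξ) • z := by
  have h := tendsto_smul_of_disagreement hn (ζ := fun m => ((a * truncate ξ m :
    Linf μ) : Ω →ₘ[μ] ℝ)) (squeeze_zero (fun _ => measureReal_nonneg)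
      (fun m => disagreement_mul_left_le _ _ _) (tendsto_disagreement_truncate ξ)) z
  simp only [coe_Linf_smul, mul_smul] at h
  exact tendsto_nhds_unique (((continuous_const_smul a).tendsto _).comp
    (tendsto_truncate_smul hn ξ z)) h

theorem L0_mul_smul (ξ η : Ω →ₘ[μ] ℝ) (z : Completion (WithL0Norm n hn)) :
    (ξ * η) • z = ξ • η • z := by
  have h := tendsto_smul_of_disagreement hn (ζ := fun m => (truncate ξ m : Ω →ₘ[μ] ℝ) * η)
    (squeeze_zero (fun _ => measureReal_nonneg)
      (fun m => disagreement_mul_right_le _ _ _) (tendsto_disagreement_truncate ξ)) z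
  simp only [← Linf_smul_L0_smul] at h
  exact tendsto_nhds_unique h (tendsto_truncate_smul hn ξ (η • z))

instance : Module (Ω →ₘ[μ] ℝ) (Completion (WithL0Norm n hn)) where
  one_smul z := (coe_Linf_smul hn 1 z).trans (one_smul _ z)
  mul_smul := L0_mul_smul hn
  smul_zero ξ := tendsto_nhds_unique (tendsto_truncate_smul hn ξ 0) (by simp)
  smul_add := L0_smul_add hn
  add_smul := L0_add_smul hn
  zero_smul z := (coe_Linf_smul hn 0 z).trans (zero_smul _ z)

theorem extendedNorm_smul (ξ : Ω →ₘ[μ] ℝ) (z : Completion (WithL0Norm n hn)) :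
    extendedNorm hn (ξ • z) = |ξ| * extendedNorm hn z := by
  refine tendsto_nhds_unique (((continuous_extendedNorm hn).tendsto _).comp
    (tendsto_truncate_smul hn ξ z)) ?_
  simp only [Function.comp_def, extendedNorm_Linf_smul]
  refine tendsto_iff_dist_tendsto_zero.mpr (squeeze_zero (fun _ => dist_nonneg)
    (fun m => (dist_le_disagreement _ _).trans ((disagreement_mul_right_le _ _ _).trans
      (disagreement_abs_abs_le _ _))) (tendsto_disagreement_truncate ξ))

theorem isRNNorm_extendedNorm : IsRNNorm μ (extendedNorm hn) where
  nonneg := extendedNorm_nonneg hn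
  eq_zero_iff := extendedNorm_eq_zero_iff hn
  norm_smul := extendedNorm_smul hn
  norm_add_le := extendedNorm_add_le hn

end Completion

end L0Extension

open L0Extension UniformSpace

/-- every `L^∞`-normed module `E` admits an `L⁰`-extension: a complete
random normed module `E₀` together with a norm-preserving `L^∞`-module homomorphism
`T : E → E₀` with dense range. -/
theorem exists_L0_extension
    {Ω : Type} [MeasurableSpace Ω] (μ : Measure Ω) [IsProbabilityMeasure μ]
    {E : Type} [AddCommGroup E] [Module (Linf μ) E]
    (n : E → Ω →ₘ[μ] ℝ) (hn : IsLinfNorm μ n) :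
    ∃ (S : RNMod Ω μ) (T : E → S.carrier), IsL0Extension μ n S T := by
  let S : RNMod Ω μ := ⟨Completion (WithL0Norm n hn), inferInstance, inferInstance,
    extendedNorm hn, isRNNorm_extendedNorm hn⟩
  have hdist : S.dist = dist := funext₂ (ndist_extendedNorm hn)
  refine ⟨S, ((↑) : WithL0Norm n hn → Completion (WithL0Norm n hn)), ?_,
    ⟨Completion.coe_add (α := WithL0Norm n hn), fun a x => ?_⟩, extendedNorm_coe hn,
    fun y ε hε => ?_⟩
  · rw [RNMod.Complete, hdist]
    exact dComplete_dist
  · exact (Completion.coe_smul (X := WithL0Norm n hn) a x).trans (coe_Linf_smul hn a _).symm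
  · obtain ⟨x, hx⟩ := (Completion.denseRange_coe (α := WithL0Norm n hn)).exists_dist_lt y hε
    exact ⟨x, by rw [hdist, dist_comm]; exact hx⟩
end
end

section
/- Let E be a subset of a complete random normed module E_0 that is also an L^∞-submodule (closed under addition and multiplication by elements of L^∞). Then H^0_cc(E), the set of all countable concatenations Σ_n Ĩ_{A_n} x_n with x_n ∈ E and {A_n} a countable measurable partition of Ω, is an L^0-submodule of E_0. -/
open MeasureTheory Filter
noncomputable section

variable {Ω : Type} [MeasurableSpace Ω] {μ : Measure Ω}

/-! Two concatenations are added cell by cell on the common refinement of their partitions.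
For `ξ ∈ L⁰`, refine further by the level sets `{n ≤ |ξ| < n + 1}`: on each of them `ξ` agrees
with the bounded `Ĩ_{n ≤ |ξ| < n + 1} ξ`, so `ξ • x` is a concatenation of `L^∞`-multiples of
elements of `E`. -/

lemma indL0_mul {A B : Set Ω} (hA : MeasurableSet A) (hB : MeasurableSet B) :
    indL0 μ A hA * indL0 μ B hB = indL0 μ (A ∩ B) (hA.inter hB) := by
  rw [indL0, indL0, AEEqFun.mk_mul_mk]
  exact AEEqFun.mk_eq_mk.2 (.of_forall fun ω => by rw [Set.inter_indicator_one])

lemma coeFn_indL0 {A : Set Ω} (hA : MeasurableSet A) :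
    indL0 μ A hA =ᵐ[μ] A.indicator 1 :=
  AEEqFun.coeFn_mk _ _

namespace MPartition

lemma ind_mul_self (P : MPartition Ω) (μ : Measure Ω) (k : ℕ) :
    P.ind μ k * P.ind μ k = P.ind μ k := by
  simp only [ind, indL0_mul, Set.inter_self]

def trivial (Ω : Type) [MeasurableSpace Ω] : MPartition Ω where
  A k := if k = 0 then Set.univ else ∅
  meas k := by split_ifs <;> simp
  disj m k h := by
    rcases eq_or_ne m 0 with rfl | hm
    · simp [Ne.symm h]
    · simp [hm]
  cover := Set.eq_univ_of_forall fun _ => Set.mem_iUnion.2 ⟨0, by simp⟩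

def inf (P Q : MPartition Ω) : MPartition Ω where
  A n := P.A n.unpair.1 ∩ Q.A n.unpair.2
  meas n := (P.meas _).inter (Q.meas _)
  disj m k h := by
    have hne : m.unpair.1 ≠ k.unpair.1 ∨ m.unpair.2 ≠ k.unpair.2 := by
      by_contra! heq
      exact h (by rw [← Nat.pair_unpair m, ← Nat.pair_unpair k, heq.1, heq.2])
    rcases hne with h1 | h2
    · rw [Set.inter_inter_inter_comm, P.disj _ _ h1, Set.empty_inter]
    · rw [Set.inter_inter_inter_comm, Q.disj _ _ h2, Set.inter_empty]
  cover := by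
    refine Set.eq_univ_of_forall fun ω => ?_
    obtain ⟨i, hi⟩ := Set.mem_iUnion.1 (P.cover ▸ Set.mem_univ ω)
    obtain ⟨j, hj⟩ := Set.mem_iUnion.1 (Q.cover ▸ Set.mem_univ ω)
    exact Set.mem_iUnion.2 ⟨Nat.pair i j, by simpa using And.intro hi hj⟩

lemma inf_ind (P Q : MPartition Ω) (μ : Measure Ω) (n : ℕ) :
    (P.inf Q).ind μ n = P.ind μ n.unpair.1 * Q.ind μ n.unpair.2 :=
  (indL0_mul _ _).symm

def floorAbs (ξ : Ω →ₘ[μ] ℝ) : MPartition Ω where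
  A n := {ω | (n : ℝ) ≤ |ξ ω| ∧ |ξ ω| < n + 1}
  meas n := by
    have hm : Measurable fun ω => |ξ ω| := ξ.measurable.abs
    exact (measurableSet_le measurable_const hm).inter (measurableSet_lt hm measurable_const)
  disj m k h := by
    refine Set.eq_empty_iff_forall_notMem.2 fun ω ⟨hm, hk⟩ => h ?_
    rw [← (Nat.floor_eq_iff (abs_nonneg _)).2 hm, ← (Nat.floor_eq_iff (abs_nonneg _)).2 hk]
  cover := Set.eq_univ_of_forall fun ω => Set.mem_iUnion.2
    ⟨⌊|ξ ω|⌋₊, Nat.floor_le (abs_nonneg _), Nat.lt_floor_add_one _⟩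

lemma floorAbs_ind_mul_mem_Linf (ξ : Ω →ₘ[μ] ℝ) (n : ℕ) :
    (floorAbs ξ).ind μ n * ξ ∈ Linf μ := by
  refine ⟨n + 1, ?_⟩
  filter_upwards [AEEqFun.coeFn_mul ((floorAbs ξ).ind μ n) ξ, coeFn_indL0 ((floorAbs ξ).meas n)]
    with ω hmul hind
  rw [hmul, Pi.mul_apply, ind, hind]
  by_cases hω : ω ∈ (floorAbs ξ).A n
  · simpa [Set.indicator_of_mem hω] using hω.2.le
  · simp only [Set.indicator_of_notMem hω, zero_mul, abs_zero]
    positivity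

end MPartition

section Hcc

variable {S : RNMod Ω μ} {E : Set S.carrier}

lemma subset_Hcc : E ⊆ Hcc S E :=
  fun z hz => ⟨fun _ => z, MPartition.trivial Ω, fun _ => hz, fun _ => rfl⟩

lemma mem_Hcc_of_inf {z : S.carrier} (P Q : MPartition Ω) (x : ℕ → ℕ → S.carrier)
    (hx : ∀ i j, x i j ∈ E)
    (hz : ∀ i j, (P.ind μ i * Q.ind μ j) • z = (P.ind μ i * Q.ind μ j) • x i j) :
    z ∈ Hcc S E :=
  ⟨fun n => x n.unpair.1 n.unpair.2, P.inf Q, fun _ => hx _ _,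
    fun n => by rw [P.inf_ind]; exact hz _ _⟩

lemma add_mem_Hcc (hadd : ∀ x ∈ E, ∀ y ∈ E, x + y ∈ E) {y z : S.carrier}
    (hy : y ∈ Hcc S E) (hz : z ∈ Hcc S E) : y + z ∈ Hcc S E := by
  obtain ⟨a, P, ha, hPa⟩ := hy
  obtain ⟨b, Q, hb, hQb⟩ := hz
  refine mem_Hcc_of_inf P Q (fun i j => a i + b j) (fun i j => hadd _ (ha i) _ (hb j))
    fun i j => ?_
  have hyi : (P.ind μ i * Q.ind μ j) • y = (P.ind μ i * Q.ind μ j) • a i := by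
    rw [mul_comm, mul_smul, hPa i, ← mul_smul]
  have hzj : (P.ind μ i * Q.ind μ j) • z = (P.ind μ i * Q.ind μ j) • b j := by
    rw [mul_smul, hQb j, ← mul_smul]
  rw [smul_add, smul_add, hyi, hzj]

lemma smul_mem_Hcc (hsmul : ∀ ξ : Linf μ, ∀ x ∈ E, (ξ : Ω →ₘ[μ] ℝ) • x ∈ E)
    (ξ : Ω →ₘ[μ] ℝ) {z : S.carrier} (hz : z ∈ Hcc S E) : ξ • z ∈ Hcc S E := by
  obtain ⟨a, P, ha, hPa⟩ := hz
  set Q := MPartition.floorAbs ξ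
  refine mem_Hcc_of_inf P Q (fun i j => (Q.ind μ j * ξ) • a i)
    (fun i j => hsmul ⟨_, MPartition.floorAbs_ind_mul_mem_Linf ξ j⟩ _ (ha i)) fun i j => ?_
  -- `Ĩ_{A_j}` is idempotent, so on the cell `A_j` the factor `ξ` may be replaced by `Ĩ_{A_j} ξ`.
  calc (P.ind μ i * Q.ind μ j) • ξ • z = (Q.ind μ j * ξ) • P.ind μ i • z := by
        rw [smul_smul, smul_smul]; congr 1; ring
    _ = (Q.ind μ j * ξ) • P.ind μ i • a i := by rw [hPa i]
    _ = (P.ind μ i * Q.ind μ j) • (Q.ind μ j * ξ) • a i := by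
        rw [smul_smul, smul_smul, show P.ind μ i * Q.ind μ j * (Q.ind μ j * ξ)
          = P.ind μ i * (Q.ind μ j * Q.ind μ j) * ξ by ring, Q.ind_mul_self]
        congr 1; ring

end Hcc

theorem Hcc_is_L0_submodule_general
    {Ω : Type} [MeasurableSpace Ω] (μ : Measure Ω)
    (S : RNMod Ω μ) (E : Set S.carrier)
    (h0 : (0 : S.carrier) ∈ E)
    (hadd : ∀ x ∈ E, ∀ y ∈ E, x + y ∈ E)
    (hsmul : ∀ (ξ : Linf μ), ∀ x ∈ E, (ξ : Ω →ₘ[μ] ℝ) • x ∈ E) :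
    (0 : S.carrier) ∈ Hcc S E ∧
    (∀ x ∈ Hcc S E, ∀ y ∈ Hcc S E, x + y ∈ Hcc S E) ∧
    (∀ (ξ : Ω →ₘ[μ] ℝ), ∀ x ∈ Hcc S E, ξ • x ∈ Hcc S E) :=
  ⟨subset_Hcc h0, fun _ hx _ hy => add_mem_Hcc hadd hx hy,
    fun ξ _ hx => smul_mem_Hcc hsmul ξ hx⟩

/-- for an `L^∞`-submodule `E` of a complete random normed module `E₀`,
the countable concatenation hull `H⁰_cc(E)` is an `L⁰`-submodule of `E₀`. -/
theorem Hcc_is_L0_submodule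
    {Ω : Type} [MeasurableSpace Ω] (μ : Measure Ω) [IsProbabilityMeasure μ]
    (S : RNMod Ω μ) (hS : S.Complete) (E : Set S.carrier)
    (h0 : (0 : S.carrier) ∈ E)
    (hadd : ∀ x ∈ E, ∀ y ∈ E, x + y ∈ E)
    (hsmul : ∀ (ξ : Linf μ), ∀ x ∈ E, (ξ : Ω →ₘ[μ] ℝ) • x ∈ E) :
    (0 : S.carrier) ∈ Hcc S E ∧
    (∀ x ∈ Hcc S E, ∀ y ∈ Hcc S E, x + y ∈ Hcc S E) ∧
    (∀ (ξ : Ω →ₘ[μ] ℝ), ∀ x ∈ Hcc S E, ξ • x ∈ Hcc S E) :=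
  Hcc_is_L0_submodule_general μ S E h0 hadd hsmul

end
end
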